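/- arXiv:2212.11249 — 3 statements merged into one kernel-verified Lean document; each statement's English description precedes it below -/
import Mathlib

section
/- Let x̄ be feasible for the box-plus-linear constraint system with x_a < x_b μ-a.e., and let ζ ∈ N_P(x̄) ∩ (−N_K(x̄)) with ζ ≠ 0. Then every ξ ∈ L^{p'}(μ) vanishing μ-a.e. on {ζ = 0} lies in the closure (norm closure if p ∈ (1,∞], weak-* closure in L^∞(μ) if p = 1) of N_K(x̄) + N_P(x̄). -/
open MeasureTheory Filter Topology Pointwise
open scoped ENNReal Classical

noncomputable section

/-- Bouligand tangent cone of a set `C` at `x`. -/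
def bouligandTangentCone {E : Type*} [NormedAddCommGroup E] [NormedSpace ℝ E]
    (C : Set E) (x : E) : Set E :=
  {d | ∃ (xs : ℕ → E) (t : ℕ → ℝ), (∀ k, xs k ∈ C) ∧ (∀ k, 0 < t k) ∧
      Tendsto xs atTop (𝓝 x) ∧ Tendsto t atTop (𝓝 0) ∧
      Tendsto (fun k => (t k)⁻¹ • (xs k - x)) atTop (𝓝 d)}

/-- The duality pairing between `L^q(μ)` and `L^p(μ)`. -/
def pairing {Ω : Type*} [MeasurableSpace Ω] (μ : Measure Ω) {q p : ℝ≥0∞}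
    (y : Lp ℝ q μ) (x : Lp ℝ p μ) : ℝ := ∫ ω, y ω * x ω ∂μ

/-- The polar of a subset of `L^p(μ)`, taken in `L^q(μ)`. -/
def polarCone {Ω : Type*} [MeasurableSpace Ω] (μ : Measure Ω) (p q : ℝ≥0∞)
    (S : Set (Lp ℝ p μ)) : Set (Lp ℝ q μ) :=
  {y | ∀ s ∈ S, pairing μ y s ≤ 0}

/-- The normal cone: polar of the Bouligand tangent cone, taken in `L^q(μ)`. -/
def normalCone {Ω : Type*} [MeasurableSpace Ω] (μ : Measure Ω) (p q : ℝ≥0∞)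
    [Fact (1 ≤ p)] (C : Set (Lp ℝ p μ)) (x : Lp ℝ p μ) : Set (Lp ℝ q μ) :=
  polarCone μ p q (bouligandTangentCone C x)

theorem closure_of_sum_contains_functions_supported_on_support_of_zeta
    {Ω : Type*} [MeasurableSpace Ω] (μ : Measure Ω) [SigmaFinite μ]
    (p q : ℝ≥0∞) [Fact (1 ≤ p)] [Fact (1 ≤ q)] (hp : 1 ≤ p) (hpq : p⁻¹ + q⁻¹ = 1)
    (xa xb : Ω → EReal) (hxa : Measurable xa) (hxb : Measurable xb)
    (hab : ∀ᵐ ω ∂μ, xa ω < xb ω)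
    (n m : ℕ) (g : Fin n → Lp ℝ q μ) (a : Fin n → ℝ)
    (h : Fin m → Lp ℝ q μ) (b : Fin m → ℝ)
    (K P : Set (Lp ℝ p μ))
    (hK : K = {y : Lp ℝ p μ | ∀ᵐ ω ∂μ, xa ω ≤ (y ω : EReal) ∧ (y ω : EReal) ≤ xb ω})
    (hP : P = {y : Lp ℝ p μ | (∀ i, pairing μ (g i) y ≤ a i) ∧ (∀ j, pairing μ (h j) y = b j)})
    (xbar : Lp ℝ p μ) (hfeas : xbar ∈ K ∩ P)
    (NK NP : Set (Lp ℝ q μ))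
    (hNK : NK = {ζ : Lp ℝ q μ |
        (∀ᵐ ω ∂μ, (xa ω = (xbar ω : EReal) ∧ (xbar ω : EReal) < xb ω) → ζ ω ≤ 0) ∧
        (∀ᵐ ω ∂μ, (xa ω < (xbar ω : EReal) ∧ (xbar ω : EReal) < xb ω) → ζ ω = 0) ∧
        (∀ᵐ ω ∂μ, (xa ω < (xbar ω : EReal) ∧ (xbar ω : EReal) = xb ω) → 0 ≤ ζ ω)})
    (hNP : NP = {ξ : Lp ℝ q μ | ∃ (α : Fin n → ℝ) (β : Fin m → ℝ),
        (∀ i, 0 ≤ α i) ∧ (∀ i, pairing μ (g i) xbar ≠ a i → α i = 0) ∧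
        ξ = ∑ i, α i • g i + ∑ j, β j • h j})
    (ζ : Lp ℝ q μ) (hζ : ζ ∈ NP) (hζ' : -ζ ∈ NK) (hζne : ζ ≠ 0)
    (ξ : Lp ℝ q μ) (hξ : ∀ᵐ ω ∂μ, ζ ω = 0 → ξ ω = 0) :
    ∃ ξk : ℕ → Lp ℝ q μ,
      (∀ k, ξk k ∈ NK + NP) ∧
      -- norm convergence for p ∈ (1,∞]
      (1 < p → Tendsto ξk atTop (𝓝 ξ)) ∧
      -- weak-star convergence in L^∞(μ) for p = 1
      (p = 1 → ∀ y : Lp ℝ p μ,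
        Tendsto (fun k => pairing μ (ξk k) y) atTop (𝓝 (pairing μ ξ y))) := by
  have hq1 : (1:ℝ≥0∞) ≤ q := Fact.out
  have hq0 : q ≠ 0 := fun hq => by simp [hq] at hq1
  have hζm : Measurable (⇑ζ) := (Lp.stronglyMeasurable ζ).measurable
  have hξm : Measurable (⇑ξ) := (Lp.stronglyMeasurable ξ).measurable
  set F : ℕ → Ω → ℝ := fun k ω =>
    if 0 < ζ ω then min (ξ ω) (k * ζ ω)
    else if ζ ω < 0 then max (ξ ω) (k * ζ ω) else 0 with hFdef
  have hFm : ∀ k, Measurable (F k) := fun k =>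
    Measurable.ite (measurableSet_lt measurable_const hζm)
      (hξm.min (hζm.const_mul k))
      (Measurable.ite (measurableSet_lt hζm measurable_const)
        (hξm.max (hζm.const_mul k)) measurable_const)
  have hFbd : ∀ k ω, ‖F k ω‖ ≤ ‖ξ ω‖ := by
    intro k ω
    simp only [hFdef, Real.norm_eq_abs]
    split_ifs with h1 h2
    · have h0 : (0:ℝ) ≤ k * ζ ω := by positivity
      rcases le_total (ξ ω) (k * ζ ω) with hle | hle
      · rw [min_eq_left hle]
      · rw [min_eq_right hle, abs_of_nonneg h0]
        exact hle.trans (le_abs_self _)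
    · have h0 : (k:ℝ) * ζ ω ≤ 0 := mul_nonpos_of_nonneg_of_nonpos (by positivity) h2.le
      rcases le_total (k * ζ ω) (ξ ω) with hle | hle
      · rw [max_eq_left hle]
      · rw [max_eq_right hle, abs_of_nonpos h0]
        exact (neg_le_neg hle).trans (neg_le_abs _)
    · simp
  have hFmem : ∀ k, MemLp (F k) q μ := fun k =>
    MemLp.of_le (Lp.memLp ξ) (hFm k).aestronglyMeasurable
      (Eventually.of_forall (hFbd k))
  have hptwise : ∀ᵐ ω ∂μ, Tendsto (fun k => F k ω) atTop (𝓝 (ξ ω)) := by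
    filter_upwards [hξ] with ω hω
    rcases lt_trichotomy (ζ ω) 0 with hneg | hzero | hpos
    · obtain ⟨K, hK⟩ := exists_nat_ge (ξ ω / ζ ω)
      apply tendsto_const_nhds.congr'
      filter_upwards [eventually_ge_atTop K] with k hk
      have hkK : (K:ℝ) ≤ (k:ℝ) := by exact_mod_cast hk
      have h1 : (k:ℝ) * ζ ω ≤ ξ ω := by
        have h2 : ξ ω / ζ ω ≤ (k:ℝ) := hK.trans hkK
        calc (k:ℝ) * ζ ω ≤ (ξ ω / ζ ω) * ζ ω := by nlinarith
          _ = ξ ω := div_mul_cancel₀ _ hneg.ne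
      simp only [hFdef, if_neg (not_lt.mpr (by linarith : ζ ω ≤ 0)), if_pos hneg,
        max_eq_left h1]
    · have : (fun k => F k ω) = fun _ => (0:ℝ) := by
        funext k; simp [hFdef, hzero]
      rw [this, hω hzero]
      exact tendsto_const_nhds
    · obtain ⟨K, hK⟩ := exists_nat_ge (ξ ω / ζ ω)
      apply tendsto_const_nhds.congr'
      filter_upwards [eventually_ge_atTop K] with k hk
      have hkK : (K:ℝ) ≤ (k:ℝ) := by exact_mod_cast hk
      have h1 : ξ ω ≤ (k:ℝ) * ζ ω := by
        have h2 : ξ ω / ζ ω ≤ (k:ℝ) := hK.trans hkK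
        calc ξ ω = (ξ ω / ζ ω) * ζ ω := (div_mul_cancel₀ _ hpos.ne').symm
          _ ≤ (k:ℝ) * ζ ω := by nlinarith
      simp only [hFdef, if_pos hpos, min_eq_left h1]
  refine ⟨fun k => (hFmem k).toLp (F k), fun k => ?_, ?_, ?_⟩
  · -- membership in NK + NP
    rw [Set.mem_add]
    refine ⟨(hFmem k).toLp (F k) - (k:ℝ) • ζ, ?_, (k:ℝ) • ζ, ?_, by abel⟩
    · -- in NK
      rw [hNK] at hζ' ⊢
      obtain ⟨hA, hB, hC⟩ := hζ'
      have hηf : ⇑((hFmem k).toLp (F k) - (k:ℝ) • ζ) =ᵐ[μ]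
          fun ω => F k ω - k * ζ ω := by
        filter_upwards [Lp.coeFn_sub ((hFmem k).toLp (F k)) ((k:ℝ) • ζ),
          Lp.coeFn_smul (k:ℝ) ζ, (hFmem k).coeFn_toLp] with ω h1 h2 h3
        simp only [Pi.sub_apply, Pi.smul_apply, smul_eq_mul] at h1 h2 ⊢
        rw [h1, h2, h3]
      have hnegζ : ⇑(-ζ) =ᵐ[μ] fun ω => -ζ ω := Lp.coeFn_neg ζ
      refine ⟨?_, ?_, ?_⟩
      · filter_upwards [hηf, hA, hnegζ] with ω h1 h2 h3
        intro hcond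
        have hz : 0 ≤ ζ ω := by have := h2 hcond; rw [h3] at this; linarith
        rw [h1]
        simp only [hFdef]
        split_ifs with hp1 hp2
        · have := min_le_right (ξ ω) ((k:ℝ) * ζ ω); linarith
        · linarith
        · have hz0 : ζ ω = 0 := le_antisymm (not_lt.mp hp1) hz
          simp [hz0]
      · filter_upwards [hηf, hB, hnegζ] with ω h1 h2 h3
        intro hcond
        have hz : ζ ω = 0 := by have := h2 hcond; rw [h3] at this; linarith
        rw [h1]
        simp [hFdef, hz]
      · filter_upwards [hηf, hC, hnegζ] with ω h1 h2 h3
        intro hcond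
        have hz : ζ ω ≤ 0 := by have := h2 hcond; rw [h3] at this; linarith
        rw [h1]
        simp only [hFdef]
        split_ifs with hp1 hp2
        · linarith
        · have := le_max_right (ξ ω) ((k:ℝ) * ζ ω); linarith
        · have hz0 : ζ ω = 0 := le_antisymm hz (not_lt.mp hp2)
          simp [hz0]
    · -- in NP
      rw [hNP] at hζ ⊢
      obtain ⟨α, β, hα0, hαc, hsum⟩ := hζ
      refine ⟨fun i => k * α i, fun j => k * β j,
        fun i => mul_nonneg (Nat.cast_nonneg k) (hα0 i),
        fun i hi => by simp [hαc i hi], ?_⟩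
      rw [hsum]
      simp [Finset.smul_sum, smul_smul, smul_add]
  · -- norm convergence for 1 < p
    intro hp1
    have hq_top : q ≠ ∞ := by
      intro hq
      rw [hq, ENNReal.inv_top, add_zero] at hpq
      exact hp1.ne' (ENNReal.inv_eq_one.mp hpq)
    have hr : 0 < q.toReal := ENNReal.toReal_pos hq0 hq_top
    rw [Lp.tendsto_Lp_iff_tendsto_eLpNorm']
    have hcongr : (fun k => eLpNorm (⇑((hFmem k).toLp (F k)) - ⇑ξ) q μ)
        = fun k => eLpNorm (F k - ⇑ξ) q μ := by
      funext k
      exact eLpNorm_congr_ae ((hFmem k).coeFn_toLp.sub EventuallyEq.rfl)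
    rw [hcongr]
    -- dominated convergence for the lintegral
    suffices hsuf : Tendsto (fun k => ∫⁻ ω, (‖F k ω - ξ ω‖₊ : ℝ≥0∞) ^ q.toReal ∂μ)
        atTop (𝓝 0) by
      simp only [eLpNorm_eq_lintegral_rpow_enorm_toReal hq0 hq_top]
      have hcont : Continuous fun x : ℝ≥0∞ => x ^ (1 / q.toReal) :=
        ENNReal.continuous_rpow_const
      have h0 : (0:ℝ≥0∞) ^ (1 / q.toReal) = 0 :=
        ENNReal.zero_rpow_of_pos (by positivity)
      have htd := (hcont.continuousAt (x := 0)).tendsto.comp hsuf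
      rw [h0] at htd
      simp only [Pi.sub_apply]
      exact htd
    have hmeas : ∀ k, Measurable fun ω => (‖F k ω - ξ ω‖₊ : ℝ≥0∞) ^ q.toReal :=
      fun k => (((hFm k).sub hξm).nnnorm.coe_nnreal_ennreal).pow_const _
    have hnn : ∀ k ω, (‖F k ω - ξ ω‖₊ : ℝ≥0∞) ≤ 2 * ‖ξ ω‖₊ := by
      intro k ω
      have h1 : ‖F k ω - ξ ω‖₊ ≤ 2 * ‖ξ ω‖₊ := by
        have h2 : ‖F k ω - ξ ω‖ ≤ 2 * ‖ξ ω‖ := by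
          have := norm_sub_le (F k ω) (ξ ω)
          have := hFbd k ω
          linarith
        rw [← NNReal.coe_le_coe]
        push_cast
        simpa using h2
      exact_mod_cast h1
    have h_bound : ∀ k, (fun ω => (‖F k ω - ξ ω‖₊ : ℝ≥0∞) ^ q.toReal) ≤ᵐ[μ]
        fun ω => ((2:ℝ≥0∞) * ‖ξ ω‖₊) ^ q.toReal := fun k =>
      Eventually.of_forall fun ω => ENNReal.rpow_le_rpow (hnn k ω) hr.le
    have h_fin : (∫⁻ ω, ((2:ℝ≥0∞) * ‖ξ ω‖₊) ^ q.toReal ∂μ) ≠ ∞ := by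
      have heq : ∀ ω, ((2:ℝ≥0∞) * ‖ξ ω‖₊) ^ q.toReal
          = (2:ℝ≥0∞) ^ q.toReal * (‖ξ ω‖₊ : ℝ≥0∞) ^ q.toReal := fun ω =>
        ENNReal.mul_rpow_of_nonneg _ _ hr.le
      simp only [heq]
      rw [lintegral_const_mul' _ _ (ENNReal.rpow_ne_top_of_nonneg hr.le (by norm_num))]
      exact (ENNReal.mul_lt_top
        (ENNReal.rpow_lt_top_of_nonneg hr.le (by norm_num))
        (lintegral_rpow_enorm_lt_top_of_eLpNorm_lt_top hq0 hq_top
          (Lp.memLp ξ).2)).ne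
    have h_lim : ∀ᵐ ω ∂μ, Tendsto (fun k => (‖F k ω - ξ ω‖₊ : ℝ≥0∞) ^ q.toReal)
        atTop (𝓝 0) := by
      filter_upwards [hptwise] with ω hω
      have h1 : Tendsto (fun k => F k ω - ξ ω) atTop (𝓝 0) := by
        simpa using hω.sub (tendsto_const_nhds (x := ξ ω))
      have h2 : Tendsto (fun k => (‖F k ω - ξ ω‖₊ : ℝ≥0∞)) atTop (𝓝 0) := by
        rw [← ENNReal.coe_zero]
        exact ENNReal.tendsto_coe.mpr (by simpa using h1.nnnorm)
      have hcont : Continuous fun x : ℝ≥0∞ => x ^ q.toReal :=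
        ENNReal.continuous_rpow_const
      have := (hcont.continuousAt (x := 0)).tendsto.comp h2
      simpa [Function.comp_def, ENNReal.zero_rpow_of_pos hr] using this
    have := tendsto_lintegral_of_dominated_convergence _ hmeas h_bound h_fin h_lim
    simpa using this
  · -- weak-star convergence for p = 1
    intro hp1 y
    have hq_top : q = ∞ := by
      rw [hp1, inv_one] at hpq
      have : q⁻¹ = 0 := by
        by_contra hcon
        have : 1 < 1 + q⁻¹ := ENNReal.lt_add_right ENNReal.one_ne_top hcon
        rw [hpq] at this
        exact lt_irrefl _ this
      exact ENNReal.inv_eq_zero.mp this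
    subst hq_top
    have hym : Measurable (⇑y) := (Lp.stronglyMeasurable y).measurable
    have hy_int : Integrable (⇑y) μ := by
      rw [← memLp_one_iff_integrable, ← hp1]
      exact Lp.memLp y
    -- essential bound for ξ
    have hξbd : ∀ᵐ ω ∂μ, ‖ξ ω‖ ≤ (eLpNorm (⇑ξ) ∞ μ).toReal := by
      have h1 : ∀ᵐ ω ∂μ, (‖ξ ω‖₊ : ℝ≥0∞) ≤ eLpNormEssSup (⇑ξ) μ :=
        ae_le_eLpNormEssSup
      have h2 : eLpNorm (⇑ξ) ∞ μ ≠ ∞ := (Lp.memLp ξ).2.ne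
      filter_upwards [h1] with ω hω
      rw [eLpNorm_exponent_top]
      have := ENNReal.toReal_mono (by rw [eLpNorm_exponent_top] at h2; exact h2) hω
      simpa using this
    set C : ℝ := (eLpNorm (⇑ξ) ∞ μ).toReal with hC
    have hcongr : ∀ k, pairing μ ((hFmem k).toLp (F k)) y = ∫ ω, F k ω * y ω ∂μ := by
      intro k
      apply integral_congr_ae
      filter_upwards [(hFmem k).coeFn_toLp] with ω hω
      rw [hω]
    simp only [hcongr]
    have : pairing μ ξ y = ∫ ω, ξ ω * y ω ∂μ := rfl
    rw [this]
    apply tendsto_integral_of_dominated_convergence (fun ω => C * ‖y ω‖)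
    · exact fun k => ((hFm k).mul hym).aestronglyMeasurable
    · exact hy_int.norm.const_mul C
    · intro k
      filter_upwards [hξbd] with ω hω
      rw [norm_mul]
      gcongr
      exact (hFbd k ω).trans hω
    · filter_upwards [hptwise] with ω hω
      exact hω.mul_const (y ω)
end
end

section
/- Let x ∈ E = K ∩ P ∩ Q be feasible and suppose there exists x̊ ∈ L^p(μ) with x_a ≤ x̊ ≤ x_b μ-a.e., ⟨g_i,x̊⟩ ≤ a_i for all i, ⟨h_j,x̊⟩ = b_j for all j, and G_i'(x)(x̊ − x) < 0 for all i ∈ B(x) := {i : G_i(x) = 0}. Then T_E(x) = T_{K∩P}(x) ∩ {h ∈ L^p(μ) : G_i'(x)h ≤ 0 for all i ∈ B(x)}. -/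
open MeasureTheory Filter Topology Pointwise
open scoped ENNReal Classical

noncomputable section

private theorem btc_closed' {E : Type*} [NormedAddCommGroup E] [NormedSpace ℝ E]
    (C : Set E) (x : E) : IsClosed (bouligandTangentCone C x) := by
  apply IsSeqClosed.isClosed
  intro ds d hds hlim
  choose xs t h1 h2 h3 h4 h5 using fun j => hds j
  have H : ∀ j : ℕ, ∃ k, dist (xs j k) x < 1/((j:ℝ)+1) ∧ t j k < 1/((j:ℝ)+1) ∧
      dist ((t j k)⁻¹ • (xs j k - x)) (ds j) < 1/((j:ℝ)+1) := by
    intro j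
    have hj : (0:ℝ) < 1/((j:ℝ)+1) := by positivity
    obtain ⟨K1, hK1⟩ := Metric.tendsto_atTop.mp (h3 j) _ hj
    obtain ⟨K2, hK2⟩ := Metric.tendsto_atTop.mp (h4 j) _ hj
    obtain ⟨K3, hK3⟩ := Metric.tendsto_atTop.mp (h5 j) _ hj
    set K0 := max K1 (max K2 K3) with hK0
    have e1 : K1 ≤ K0 := le_max_left _ _
    have e2 : K2 ≤ K0 := le_trans (le_max_left _ _) (le_max_right _ _)
    have e3 : K3 ≤ K0 := le_trans (le_max_right _ _) (le_max_right _ _)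
    refine ⟨K0, hK1 _ e1, ?_, hK3 _ e3⟩
    have h := hK2 _ e2
    rw [Real.dist_eq, sub_zero] at h
    exact lt_of_le_of_lt (le_abs_self _) h
  choose k hk1 hk2 hk3 using H
  refine ⟨fun j => xs j (k j), fun j => t j (k j), fun j => h1 j (k j), fun j => h2 j (k j),
    ?_, ?_, ?_⟩
  · rw [tendsto_iff_dist_tendsto_zero]
    exact squeeze_zero (fun j => dist_nonneg) (fun j => le_of_lt (hk1 j))
      tendsto_one_div_add_atTop_nhds_zero_nat
  · exact squeeze_zero (fun j => (h2 j (k j)).le) (fun j => (hk2 j).le)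
      tendsto_one_div_add_atTop_nhds_zero_nat
  · rw [tendsto_iff_dist_tendsto_zero]
    refine squeeze_zero (fun j => dist_nonneg)
      (fun j => (dist_triangle _ (ds j) d).trans (add_le_add (hk3 j).le le_rfl)) ?_
    have := tendsto_one_div_add_atTop_nhds_zero_nat.add (tendsto_iff_dist_tendsto_zero.mp hlim)
    simpa using this

private theorem rem_tendsto' {E : Type*} [NormedAddCommGroup E] [NormedSpace ℝ E]
    {G : E → ℝ} {Φ : E →L[ℝ] ℝ} {x : E} (hG : HasFDerivAt G Φ x)
    (ys : ℕ → E) (t : ℕ → ℝ) (e : E) (ht : ∀ k, 0 < t k)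
    (hys : Tendsto ys atTop (𝓝 x))
    (hq : Tendsto (fun k => (t k)⁻¹ • (ys k - x)) atTop (𝓝 e)) :
    Tendsto (fun k => (t k)⁻¹ * (G (ys k) - G x - Φ (ys k - x))) atTop (𝓝 0) := by
  have ho := (hG.isLittleO).comp_tendsto hys
  rw [NormedAddCommGroup.tendsto_nhds_zero]
  intro ε hε
  have hc : (0:ℝ) < ε / (2 * (‖e‖ + 1)) := by positivity
  have hb : ∀ᶠ k in atTop, ‖(t k)⁻¹ • (ys k - x)‖ < ‖e‖ + 1 :=
    hq.norm.eventually_lt_const (by linarith [norm_nonneg e])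
  filter_upwards [ho.def hc, hb] with k h1 h2
  have htk := ht k
  have e0 : ‖(t k)⁻¹ * (G (ys k) - G x - Φ (ys k - x))‖
      = (t k)⁻¹ * ‖G (ys k) - G x - Φ (ys k - x)‖ := by
    rw [norm_mul, Real.norm_eq_abs (t k)⁻¹, abs_of_pos (inv_pos.mpr htk)]
  rw [e0]
  have h3 : (t k)⁻¹ * ‖G (ys k) - G x - Φ (ys k - x)‖
      ≤ (t k)⁻¹ * (ε / (2 * (‖e‖ + 1)) * ‖ys k - x‖) :=
    mul_le_mul_of_nonneg_left h1 (inv_pos.mpr htk).le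
  have h4 : (t k)⁻¹ * ‖ys k - x‖ = ‖(t k)⁻¹ • (ys k - x)‖ := by
    rw [norm_smul, Real.norm_eq_abs (t k)⁻¹, abs_of_pos (inv_pos.mpr htk)]
  calc (t k)⁻¹ * ‖G (ys k) - G x - Φ (ys k - x)‖
      ≤ ε / (2 * (‖e‖ + 1)) * ((t k)⁻¹ * ‖ys k - x‖) := by linarith [h3]
    _ < ε := by
        rw [h4]
        have hpos : (0:ℝ) < ‖e‖ + 1 := by linarith [norm_nonneg e]
        calc ε / (2 * (‖e‖ + 1)) * ‖(t k)⁻¹ • (ys k - x)‖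
            ≤ ε / (2 * (‖e‖ + 1)) * (‖e‖ + 1) := mul_le_mul_of_nonneg_left h2.le hc.le
          _ = ε / 2 := by field_simp
          _ < ε := by linarith

private theorem pairing_integrable' {Ω : Type*} [MeasurableSpace Ω] {μ : Measure Ω}
    {p q : ℝ≥0∞} (hpq : p⁻¹ + q⁻¹ = 1) (y : Lp ℝ q μ) (z : Lp ℝ p μ) :
    Integrable (fun ω => y ω * z ω) μ := by
  have h1 : (1:ℝ≥0∞)/1 = 1/q + 1/p := by
    simp only [one_div, inv_one]; rw [add_comm]; exact hpq.symm
  haveI : ENNReal.HolderTriple q p 1 := ⟨by rw [inv_one, add_comm]; exact hpq⟩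
  have h := (Lp.memLp z).smul (Lp.memLp y) (r := 1)
  rw [memLp_one_iff_integrable] at h
  exact h

private theorem pairing_add_smul' {Ω : Type*} [MeasurableSpace Ω] {μ : Measure Ω}
    {p q : ℝ≥0∞} [Fact (1 ≤ p)] (hpq : p⁻¹ + q⁻¹ = 1) (y : Lp ℝ q μ)
    (u v : Lp ℝ p μ) (c : ℝ) :
    pairing μ y (u + c • v) = pairing μ y u + c * pairing μ y v := by
  unfold pairing
  have hu := pairing_integrable' hpq y u
  have hv := pairing_integrable' hpq y v
  have h1 : (fun ω => y ω * (u + c • v : Lp ℝ p μ) ω)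
      =ᵐ[μ] fun ω => y ω * u ω + c * (y ω * v ω) := by
    filter_upwards [Lp.coeFn_add u (c • v), Lp.coeFn_smul c v] with ω e1 e2
    rw [e1, Pi.add_apply, e2, Pi.smul_apply, smul_eq_mul]; ring
  rw [integral_congr_ae h1, integral_add hu (hv.const_mul c), integral_const_mul]

private theorem pairing_sub' {Ω : Type*} [MeasurableSpace Ω] {μ : Measure Ω}
    {p q : ℝ≥0∞} [Fact (1 ≤ p)] (hpq : p⁻¹ + q⁻¹ = 1) (y : Lp ℝ q μ)
    (u v : Lp ℝ p μ) :
    pairing μ y (u - v) = pairing μ y u - pairing μ y v := by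
  have h := pairing_add_smul' hpq y u v (-1)
  rw [neg_one_smul, ← sub_eq_add_neg] at h
  rw [h]; ring

theorem tangent_cone_of_nonlinear_constraints_rzk
    {Ω : Type*} [MeasurableSpace Ω] (μ : Measure Ω) [SigmaFinite μ]
    (p q : ℝ≥0∞) [Fact (1 ≤ p)] [Fact (1 ≤ q)] (hp : 1 ≤ p) (hpq : p⁻¹ + q⁻¹ = 1)
    (xa xb : Ω → EReal) (hxa : Measurable xa) (hxb : Measurable xb)
    (n m N : ℕ) (g : Fin n → Lp ℝ q μ) (a : Fin n → ℝ)
    (h : Fin m → Lp ℝ q μ) (b : Fin m → ℝ)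
    -- the nonlinear constraint functions, continuously Fréchet differentiable
    (G : Fin N → Lp ℝ p μ → ℝ) (Φ : Fin N → Lp ℝ p μ → (Lp ℝ p μ →L[ℝ] ℝ))
    (hGdiff : ∀ i y, HasFDerivAt (G i) (Φ i y) y) (hGcont : ∀ i, Continuous (Φ i))
    (K P Q E : Set (Lp ℝ p μ))
    (hK : K = {y : Lp ℝ p μ | ∀ᵐ ω ∂μ, xa ω ≤ (y ω : EReal) ∧ (y ω : EReal) ≤ xb ω})
    (hP : P = {y : Lp ℝ p μ | (∀ i, pairing μ (g i) y ≤ a i) ∧ (∀ j, pairing μ (h j) y = b j)})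
    (hQ : Q = {y : Lp ℝ p μ | ∀ i, G i y ≤ 0})
    (hE : E = K ∩ P ∩ Q)
    (x : Lp ℝ p μ) (hfeas : x ∈ E)
    -- the RZK-type point
    (xcirc : Lp ℝ p μ)
    (hrzk₁ : ∀ᵐ ω ∂μ, xa ω ≤ (xcirc ω : EReal) ∧ (xcirc ω : EReal) ≤ xb ω)
    (hrzk₂ : ∀ i, pairing μ (g i) xcirc ≤ a i)
    (hrzk₃ : ∀ j, pairing μ (h j) xcirc = b j)
    (hrzk₄ : ∀ i, G i x = 0 → Φ i x (xcirc - x) < 0) :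
    bouligandTangentCone E x =
      bouligandTangentCone (K ∩ P) x ∩
        {d : Lp ℝ p μ | ∀ i, G i x = 0 → Φ i x d ≤ 0} := by
  rw [hE] at hfeas
  have hxKP : x ∈ K ∩ P := hfeas.1
  have hxQ : ∀ i, G i x ≤ 0 := by have h0 := hfeas.2; rwa [hQ] at h0
  have hGc : ∀ i, Continuous (G i) :=
    fun i => continuous_iff_continuousAt.mpr fun y => (hGdiff i y).continuousAt
  have hconv : ∀ y, y ∈ K ∩ P → ∀ c : ℝ, 0 ≤ c → c ≤ 1 →
      y + c • (xcirc - y) ∈ K ∩ P := by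
    rintro y ⟨hyK, hyP⟩ c hc0 hc1
    constructor
    · rw [hK] at hyK ⊢
      simp only [Set.mem_setOf_eq] at hyK ⊢
      filter_upwards [hyK, hrzk₁, Lp.coeFn_add y (c • (xcirc - y)),
        Lp.coeFn_smul c (xcirc - y), Lp.coeFn_sub xcirc y] with ω hy hx e1 e2 e3
      rw [e1, Pi.add_apply, e2, Pi.smul_apply, e3, Pi.sub_apply, smul_eq_mul]
      set u := (y : Ω → ℝ) ω with hu
      set v := (xcirc : Ω → ℝ) ω with hv
      have hmm : min u v ≤ u + c * (v - u) ∧ u + c * (v - u) ≤ max u v := by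
        rcases le_total u v with hle | hle
        · rw [min_eq_left hle, max_eq_right hle]
          constructor <;> nlinarith
        · rw [min_eq_right hle, max_eq_left hle]
          constructor <;> nlinarith
      constructor
      · refine le_trans ?_ (EReal.coe_le_coe_iff.mpr hmm.1)
        rcases le_total u v with hle | hle
        · rw [min_eq_left hle]; exact hy.1
        · rw [min_eq_right hle]; exact hx.1
      · refine le_trans (EReal.coe_le_coe_iff.mpr hmm.2) ?_
        rcases le_total u v with hle | hle
        · rw [max_eq_right hle]; exact hx.2
        · rw [max_eq_left hle]; exact hy.2
    · rw [hP] at hyP ⊢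
      have hrw : ∀ w : Lp ℝ q μ, pairing μ w (y + c • (xcirc - y))
          = pairing μ w y + c * (pairing μ w xcirc - pairing μ w y) := by
        intro w; rw [pairing_add_smul' hpq, pairing_sub' hpq]
      refine ⟨fun i => ?_, fun j => ?_⟩
      · rw [hrw]
        have hA := hyP.1 i
        have hB := hrzk₂ i
        nlinarith [mul_nonneg hc0 (sub_nonneg.mpr hB),
          mul_nonneg (sub_nonneg.mpr hc1) (sub_nonneg.mpr hA)]
      · rw [hrw, hyP.2 j, hrzk₃ j]; ring
  apply Set.Subset.antisymm
  · -- tangent cone of E ⊆ intersection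
    intro d hd
    obtain ⟨xs, t, hmem, ht, hxs, ht0, hq⟩ := hd
    have hmemKP : ∀ k, xs k ∈ K ∩ P := fun k => by
      have h0 := hmem k; rw [hE] at h0; exact h0.1
    have hmemQ : ∀ k i, G i (xs k) ≤ 0 := fun k => by
      have h0 := hmem k; rw [hE] at h0
      have h1 := h0.2; rwa [hQ] at h1
    refine ⟨⟨xs, t, hmemKP, ht, hxs, ht0, hq⟩, ?_⟩
    intro i hi
    have hrem := rem_tendsto' (hGdiff i x) xs t d ht hxs hq
    have hΦ : Tendsto (fun k => (Φ i x) ((t k)⁻¹ • (xs k - x))) atTop (𝓝 ((Φ i x) d)) :=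
      ((Φ i x).continuous.tendsto d).comp hq
    have hsum := hΦ.add hrem
    rw [add_zero] at hsum
    refine le_of_tendsto hsum (Eventually.of_forall fun k => ?_)
    have hval : (Φ i x) ((t k)⁻¹ • (xs k - x))
        + (t k)⁻¹ * (G i (xs k) - G i x - (Φ i x) (xs k - x))
        = (t k)⁻¹ * G i (xs k) := by
      rw [ContinuousLinearMap.map_smul, smul_eq_mul, hi]; ring
    rw [hval]
    exact mul_nonpos_iff.mpr (Or.inl ⟨(inv_pos.mpr (ht k)).le, hmemQ k i⟩)
  · -- intersection ⊆ tangent cone of E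
    rintro d ⟨hd1, hd2⟩
    have key : ∀ ε : ℝ, 0 < ε → d + ε • (xcirc - x) ∈ bouligandTangentCone E x := by
      intro ε hε
      obtain ⟨xs, t, hmem, ht, hxs, ht0, hq⟩ := hd1
      set dε := d + ε • (xcirc - x) with hdε
      set ys : ℕ → Lp ℝ p μ := fun k => xs k + (ε * t k) • (xcirc - xs k) with hys_def
      have hεt : Tendsto (fun k => ε * t k) atTop (𝓝 0) := by
        simpa using ht0.const_mul ε
      have hys : Tendsto ys atTop (𝓝 x) := by
        have h1 : Tendsto (fun k => (ε * t k) • (xcirc - xs k)) atTop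
            (𝓝 ((0:ℝ) • (xcirc - x))) := hεt.smul (tendsto_const_nhds.sub hxs)
        rw [zero_smul] at h1
        have h2 := hxs.add h1
        rwa [add_zero] at h2
      have heq : (fun k => (t k)⁻¹ • (ys k - x))
          = fun k => (t k)⁻¹ • (xs k - x) + ε • (xcirc - xs k) := by
        funext k
        have htk : t k ≠ 0 := (ht k).ne'
        simp only [hys_def]
        rw [add_sub_right_comm, smul_add, smul_smul, mul_comm ε (t k), ← mul_assoc,
          inv_mul_cancel₀ htk, one_mul]
      have hq' : Tendsto (fun k => (t k)⁻¹ • (ys k - x)) atTop (𝓝 dε) := by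
        rw [heq]
        exact hq.add ((tendsto_const_nhds.sub hxs).const_smul ε)
      have hev : ∀ᶠ k in atTop, ys k ∈ E := by
        have hc1 : ∀ᶠ k in atTop, ε * t k < 1 := hεt.eventually_lt_const one_pos
        have hKP : ∀ᶠ k in atTop, ys k ∈ K ∩ P := by
          filter_upwards [hc1] with k hk
          exact hconv (xs k) (hmem k) (ε * t k) (mul_pos hε (ht k)).le hk.le
        have hQev : ∀ᶠ k in atTop, ∀ i, G i (ys k) ≤ 0 := by
          rw [eventually_all]
          intro i
          by_cases hi : G i x = 0
          · have hΦneg : (Φ i x) dε < 0 := by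
              have h1 := hd2 i hi
              have h2 := hrzk₄ i hi
              have h3 : (Φ i x) dε = (Φ i x) d + ε * (Φ i x) (xcirc - x) := by
                rw [hdε, map_add, ContinuousLinearMap.map_smul, smul_eq_mul]
              rw [h3]; nlinarith
            have hrem := rem_tendsto' (hGdiff i x) ys t dε ht hys hq'
            have hΦt : Tendsto (fun k => (Φ i x) ((t k)⁻¹ • (ys k - x))) atTop
                (𝓝 ((Φ i x) dε)) := ((Φ i x).continuous.tendsto dε).comp hq'
            have hsum := hΦt.add hrem
            rw [add_zero] at hsum
            filter_upwards [hsum.eventually_lt_const hΦneg] with k hk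
            have htk := ht k
            have hval : (Φ i x) ((t k)⁻¹ • (ys k - x))
                + (t k)⁻¹ * (G i (ys k) - G i x - (Φ i x) (ys k - x))
                = (t k)⁻¹ * G i (ys k) := by
              rw [ContinuousLinearMap.map_smul, smul_eq_mul, hi]; ring
            rw [hval] at hk
            by_contra hcon
            push_neg at hcon
            exact absurd hk (not_lt.mpr (mul_nonneg (inv_pos.mpr htk).le hcon.le))
          · have hx0 : G i x < 0 := lt_of_le_of_ne (hxQ i) hi
            have hten := ((hGc i).tendsto x).comp hys
            filter_upwards [hten.eventually_lt_const hx0] with k hk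
            exact hk.le
        filter_upwards [hKP, hQev] with k h1 h2
        rw [hE]
        exact ⟨h1, by rw [hQ]; exact h2⟩
      obtain ⟨K₀, hK₀⟩ := eventually_atTop.mp hev
      exact ⟨fun k => ys (k + K₀), fun k => t (k + K₀),
        fun k => hK₀ _ (Nat.le_add_left _ _), fun k => ht _,
        hys.comp (tendsto_add_atTop_nat K₀), ht0.comp (tendsto_add_atTop_nat K₀),
        hq'.comp (tendsto_add_atTop_nat K₀)⟩
    have hdlim : Tendsto (fun j : ℕ => d + (1/((j:ℝ)+1)) • (xcirc - x)) atTop (𝓝 d) := by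
      have h1 : Tendsto (fun j : ℕ => (1/((j:ℝ)+1)) • (xcirc - x)) atTop
          (𝓝 ((0:ℝ) • (xcirc - x))) :=
        tendsto_one_div_add_atTop_nhds_zero_nat.smul_const (xcirc - x)
      rw [zero_smul] at h1
      have h2 := h1.const_add d
      rwa [add_zero] at h2
    exact (btc_closed' E x).mem_of_tendsto hdlim
      (Eventually.of_forall fun j => key _ (by positivity))
end
end

section
/- Let Ω = (0,1) with Lebesgue measure, p = 2, K = {x ∈ L²(0,1) : x ≥ 0 a.e.}, and P = {x ∈ L²(0,1) : ∫₀¹ x dμ ≤ 0}. Then x̄ = 0 is the unique point of K ∩ P; a function ζ ∈ L²(0,1) belongs to N_K(x̄) + N_P(x̄) if and only if max(ζ,0) ∈ L^∞(0,1); and consequently the closure of N_K(x̄) + N_P(x̄) is all of L²(0,1), so N_K(x̄) + N_P(x̄) is not closed. -/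
open MeasureTheory Filter Topology Pointwise
open scoped ENNReal Classical

noncomputable section

/-- Lebesgue measure on `(0,1)`. -/
def μ01 : Measure ℝ := MeasureTheory.volume.restrict (Set.Ioo 0 1)

instance : IsFiniteMeasure μ01 := by
  constructor
  rw [μ01, Measure.restrict_apply_univ]
  simp [Real.volume_Ioo]

/-- The constant function `1` as an element of `L²(0,1)`. -/
def oneL2 : Lp ℝ 2 μ01 := (memLp_const (1 : ℝ)).toLp fun _ => (1 : ℝ)

/-!
An element `x ≥ 0` with `∫ x ≤ 0` vanishes, so `K ∩ P = {0}`. Writing `ζ = η + α • 1` with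
`η ≤ 0` forces `ζ ≤ α`, and conversely an essential upper bound `C ≥ 0` of `ζ` gives
`ζ = (ζ - C • 1) + C • 1`; so `N_K(0) + N_P(0)` consists of the functions whose positive part is
essentially bounded. This set contains the simple functions, hence is dense in `L²(0,1)`, but it
misses `x ↦ x ^ (-1/4)`, which lies in `L²(0,1)` but not in `L⁴(0,1) ⊇ L^∞(0,1)`.
-/

open Set

section RealLp

variable {α : Type*} [MeasurableSpace α] {μ : Measure α} {p : ℝ≥0∞}

lemma memLp_top_max_zero_iff {f : α → ℝ} (hf : AEStronglyMeasurable f μ) :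
    MemLp (fun x => max (f x) 0) ∞ μ ↔ ∃ C, ∀ᵐ x ∂μ, f x ≤ C := by
  constructor
  · intro h
    obtain ⟨C, hC⟩ := (eLpNormEssSup_lt_top_iff_isBoundedUnder (f := fun x => max (f x) 0)).mp
      (by rw [← eLpNorm_exponent_top]; exact h.eLpNorm_lt_top)
    refine ⟨C, ?_⟩
    filter_upwards [eventually_map.mp hC] with x hx
    calc f x ≤ max (f x) 0 := le_max_left _ _
      _ ≤ ‖max (f x) 0‖ := Real.le_norm_self _
      _ ≤ C := hx
  · rintro ⟨C, hC⟩
    refine memLp_top_of_bound (hf.sup aestronglyMeasurable_const) (max C 0) ?_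
    filter_upwards [hC] with x hx
    rw [Real.norm_of_nonneg (le_max_right _ _)]
    exact max_le_max_right 0 hx

lemma Lp.simpleFunc.exists_ae_le (f : Lp.simpleFunc ℝ p μ) :
    ∃ C, ∀ᵐ x ∂μ, (f : Lp ℝ p μ) x ≤ C := by
  obtain ⟨C, hC⟩ := (Lp.simpleFunc.toSimpleFunc f).exists_forall_norm_le
  refine ⟨C, ?_⟩
  filter_upwards [Lp.simpleFunc.toSimpleFunc_eq_toFun f] with x hx
  exact hx ▸ (Real.le_norm_self _).trans (hC x)

lemma mem_ae_nonpos_add_ray_iff {c : Lp ℝ p μ} (hc : ∀ᵐ x ∂μ, c x = 1) (ζ : Lp ℝ p μ) :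
    ζ ∈ {η : Lp ℝ p μ | ∀ᵐ x ∂μ, η x ≤ 0} + {ξ | ∃ a : ℝ, 0 ≤ a ∧ ξ = a • c} ↔
      ∃ C, ∀ᵐ x ∂μ, ζ x ≤ C := by
  constructor
  · rintro ⟨η, hη, _, ⟨a, -, rfl⟩, rfl⟩
    refine ⟨a, ?_⟩
    filter_upwards [Lp.coeFn_add η (a • c), Lp.coeFn_smul a c, hc, hη] with x hadd hsmul hcx hηx
    simp only [hadd, Pi.add_apply, hsmul, Pi.smul_apply, hcx, smul_eq_mul, mul_one]
    linarith
  · rintro ⟨C, hC⟩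
    refine ⟨ζ - max C 0 • c, ?_, max C 0 • c, ⟨max C 0, le_max_right C 0, rfl⟩, sub_add_cancel _ _⟩
    filter_upwards [Lp.coeFn_sub ζ (max C 0 • c), Lp.coeFn_smul (max C 0) c, hc, hC]
      with x hsub hsmul hcx hCx
    simp only [hsub, Pi.sub_apply, hsmul, Pi.smul_apply, hcx, smul_eq_mul, mul_one]
    linarith [le_max_left C 0]

lemma Lp.eq_zero_of_ae_nonneg_of_integral_nonpos [IsFiniteMeasure μ] [Fact (1 ≤ p)]
    {f : Lp ℝ p μ} (hf : ∀ᵐ x ∂μ, 0 ≤ f x) (hint : ∫ x, f x ∂μ ≤ 0) : f = 0 := by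
  have hf_int : Integrable f μ := (Lp.memLp f).integrable Fact.out
  have hzero : ∫ x, f x ∂μ = 0 := hint.antisymm (integral_nonneg_of_ae hf)
  exact Lp.eq_zero_iff_ae_eq_zero.mpr ((integral_eq_zero_iff_of_nonneg_ae hf hf_int).mp hzero)

lemma Lp.ae_nonneg_inter_integral_nonpos_eq_zero [IsFiniteMeasure μ] [Fact (1 ≤ p)] :
    {f : Lp ℝ p μ | ∀ᵐ x ∂μ, 0 ≤ f x} ∩ {f | ∫ x, f x ∂μ ≤ 0} = {0} := by
  refine Subset.antisymm (fun f ⟨hf, hint⟩ => Lp.eq_zero_of_ae_nonneg_of_integral_nonpos hf hint) ?_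
  rintro _ rfl
  exact ⟨(Lp.coeFn_zero ℝ p μ).mono fun x hx => hx.symm ▸ le_rfl,
    (integral_congr_ae (Lp.coeFn_zero ℝ p μ)).trans_le (by simp)⟩

end RealLp

section PowerFunction

variable {r t : ℝ}

lemma memLp_rpow_Ioo_iff (ht : 0 < t) {p : ℝ≥0∞} (hp0 : p ≠ 0) (hp : p ≠ ∞) :
    MemLp (fun x : ℝ => x ^ r) p (volume.restrict (Ioo 0 t)) ↔ -1 < r * p.toReal := by
  rw [← integrable_norm_rpow_iff (measurable_id'.pow_const r).aestronglyMeasurable hp0 hp,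
    ← intervalIntegral.integrableOn_Ioo_rpow_iff ht]
  refine integrableOn_congr_fun (fun x hx => ?_) measurableSet_Ioo
  rw [Real.norm_of_nonneg (Real.rpow_nonneg hx.1.le r), ← Real.rpow_mul hx.1.le]

lemma not_memLp_top_rpow_Ioo (ht : 0 < t) (hr : r < 0) :
    ¬ MemLp (fun x : ℝ => x ^ r) ∞ (volume.restrict (Ioo 0 t)) := by
  intro h
  have hq : 0 < -r⁻¹ := neg_pos.mpr (inv_lt_zero.mpr hr)
  have := (memLp_rpow_Ioo_iff ht (ENNReal.ofReal_pos.mpr hq).ne' ENNReal.ofReal_ne_top).mp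
    (h.mono_exponent le_top)
  rw [ENNReal.toReal_ofReal hq.le, mul_neg, mul_inv_cancel₀ hr.ne] at this
  exact lt_irrefl _ this

lemma not_exists_ae_rpow_le (ht : 0 < t) (hr : r < 0) :
    ¬ ∃ C, ∀ᵐ x ∂(volume.restrict (Ioo 0 t)), x ^ r ≤ C := by
  rintro ⟨C, hC⟩
  refine not_memLp_top_rpow_Ioo ht hr
    (memLp_top_of_bound (measurable_id'.pow_const r).aestronglyMeasurable C ?_)
  filter_upwards [hC, ae_restrict_mem measurableSet_Ioo] with x hxC hx
  rwa [Real.norm_of_nonneg (Real.rpow_nonneg hx.1.le r)]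

end PowerFunction

lemma oneL2_ae_eq_one : ∀ᵐ x ∂μ01, oneL2 x = 1 := (memLp_const (1 : ℝ)).coeFn_toLp

theorem counterexample_without_slater_point
    (K P : Set (Lp ℝ 2 μ01))
    (hK : K = {x : Lp ℝ 2 μ01 | ∀ᵐ ω ∂μ01, 0 ≤ x ω})
    (hP : P = {x : Lp ℝ 2 μ01 | ∫ ω, x ω ∂μ01 ≤ 0})
    (NK NP : Set (Lp ℝ 2 μ01))
    (hNK : NK = {ζ : Lp ℝ 2 μ01 | ∀ᵐ ω ∂μ01, ζ ω ≤ 0})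
    (hNP : NP = {ξ : Lp ℝ 2 μ01 | ∃ α : ℝ, 0 ≤ α ∧ ξ = α • oneL2}) :
    K ∩ P = {0} ∧
    (∀ ζ : Lp ℝ 2 μ01, ζ ∈ NK + NP ↔ MemLp (fun ω => max (ζ ω) 0) ∞ μ01) ∧
    closure (NK + NP) = Set.univ ∧
    ¬ IsClosed (NK + NP) := by
  subst hK hP hNK hNP
  have hmem := mem_ae_nonpos_add_ray_iff oneL2_ae_eq_one
  have hdense : Dense ({ζ : Lp ℝ 2 μ01 | ∀ᵐ ω ∂μ01, ζ ω ≤ 0} +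
      {ξ : Lp ℝ 2 μ01 | ∃ α : ℝ, 0 ≤ α ∧ ξ = α • oneL2}) :=
    (Lp.simpleFunc.dense (p := 2) ENNReal.ofNat_ne_top).mono fun f hf =>
      (hmem f).mpr (Lp.simpleFunc.exists_ae_le ⟨f, hf⟩)
  refine ⟨Lp.ae_nonneg_inter_integral_nonpos_eq_zero (p := 2),
    fun ζ => (hmem ζ).trans (memLp_top_max_zero_iff (Lp.aestronglyMeasurable ζ)).symm,
    hdense.closure_eq, fun hclosed => ?_⟩
  have hL2 : MemLp (fun x : ℝ => x ^ (-4⁻¹ : ℝ)) 2 μ01 :=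
    (memLp_rpow_Ioo_iff (p := 2) one_pos two_ne_zero ENNReal.ofNat_ne_top).mpr (by norm_num)
  obtain ⟨C, hC⟩ := (hmem (hL2.toLp _)).mp (hclosed.closure_eq ▸ hdense.closure_eq ▸ mem_univ _)
  refine not_exists_ae_rpow_le one_pos (by norm_num : (-4⁻¹ : ℝ) < 0) ⟨C, ?_⟩
  filter_upwards [hC, hL2.coeFn_toLp] with x hxC hx
  rwa [← hx]
end
end
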